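/- Every nice 7-coloring of the whole triangular lattice is an Isbell coloring. Precisely: if c : ℤ × ℤ → Fin 7 is such that any two distinct vertices of T at graph distance at most 2 satisfy c(u) ≠ c(v), then there exist z ∈ {3, 5} ⊆ ZMod 7 and a bijection π : ZMod 7 → Fin 7 such that c(v) = π(ℓ_z(v)) for all v ∈ ℤ × ℤ. -/

import Mathlib

/-- The triangular lattice graph on `ℤ × ℤ`: `(a,b)` and `(c,d)` are adjacent iff
`(c − a, d − b) ∈ {(1,0), (−1,0), (0,1), (0,−1), (1,−1), (−1,1)}`. -/
def triLattice : SimpleGraph (ℤ × ℤ) where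
  Adj u v := (v.1 - u.1, v.2 - u.2) ∈
    ({(1, 0), (-1, 0), (0, 1), (0, -1), (1, -1), (-1, 1)} : Set (ℤ × ℤ))
  symm := by
    refine ⟨fun u v h => ?_⟩
    simp only [Set.mem_insert_iff, Set.mem_singleton_iff, Prod.mk.injEq] at h ⊢
    omega
  loopless := by
    refine ⟨fun u h => ?_⟩
    simp only [Set.mem_insert_iff, Set.mem_singleton_iff, Prod.mk.injEq] at h
    omega

/-- The linear coloring `ℓ_z : ℤ × ℤ → ZMod 7`, `ℓ_z(x, y) = x + z·y`. -/
def linColoring (z : ZMod 7) (v : ℤ × ℤ) : ZMod 7 :=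
  (v.1 : ZMod 7) + z * (v.2 : ZMod 7)

/-!
In a nice colouring by seven colours every closed neighbourhood (seven vertices, pairwise at
distance at most 2) is rainbow. The colour of `v` must therefore occur around `v + (1, 1)`, and
the only admissible places are `v + (1, 2)` and `v + (2, 1)`. In the first case a second look at
two neighbourhoods shows that `v + (3, -1)` carries the colour of `v` as well; by the rotational
symmetry of the lattice the colour of `v` then repeats along all six shortest vectors of
`ker ℓ₃`, hence on the whole coset `v + ker ℓ₃`. Swapping the coordinates turns the second case
into the same statement for `ker ℓ₅`. A coset of `ker ℓ₃` and a coset of `ker ℓ₅` always meet,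
at some `x`, and then the adjacent vertices `x + (1, 2)` and `x + (2, 1)` would share a colour; so
a single `z` works at every vertex, `c` is constant on the fibres of `ℓ_z`, and the induced map
`ZMod 7 → Fin 7` is a surjection between sets of the same size.
-/

open SimpleGraph

/-- `hexNorm (v - u)` is the graph distance from `u` to `v` in `triLattice`. -/
def hexNorm (p : ℤ × ℤ) : ℕ := max (max p.1.natAbs p.2.natAbs) (p.1 + p.2).natAbs

lemma hexNorm_eq_zero {p : ℤ × ℤ} : hexNorm p = 0 ↔ p = 0 := by
  simp only [hexNorm, Prod.ext_iff, Prod.fst_zero, Prod.snd_zero]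
  omega

lemma hexNorm_le_iff {p : ℤ × ℤ} {n : ℕ} : hexNorm p ≤ n ↔
    -(n : ℤ) ≤ p.1 ∧ p.1 ≤ n ∧ -(n : ℤ) ≤ p.2 ∧ p.2 ≤ n ∧ -(n : ℤ) ≤ p.1 + p.2 ∧ p.1 + p.2 ≤ n := by
  simp only [hexNorm]
  omega

lemma triLattice_adj_iff {u v : ℤ × ℤ} : triLattice.Adj u v ↔ hexNorm (v - u) = 1 := by
  change _ ∈ _ ↔ _
  simp only [Set.mem_insert_iff, Set.mem_singleton_iff, Prod.mk.injEq, hexNorm, Prod.fst_sub,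
    Prod.snd_sub]
  omega

lemma triLattice_edist_le_one_iff {u v : ℤ × ℤ} :
    triLattice.edist u v ≤ 1 ↔ hexNorm (v - u) ≤ 1 := by
  rw [edist_le_one_iff_adj_or_eq, triLattice_adj_iff, eq_comm (a := u), ← sub_eq_zero (a := v),
    ← hexNorm_eq_zero]
  omega

lemma exists_hexNorm_le_one_hexNorm_sub_le_one {d : ℤ × ℤ} (hd : hexNorm d ≤ 2) :
    ∃ e, hexNorm e ≤ 1 ∧ hexNorm (d - e) ≤ 1 := by
  obtain ⟨a, b⟩ := d
  obtain ⟨ha₁, ha₂, hb₁, hb₂, -, -⟩ := hexNorm_le_iff.mp hd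
  have key : hexNorm (a, b) ≤ 2 → ∃ e ∈ ({0, (1, 0), (0, 1), (1, -1), (-1, 0), (0, -1), (-1, 1)} :
      Finset (ℤ × ℤ)), hexNorm e ≤ 1 ∧ hexNorm ((a, b) - e) ≤ 1 := by
    push_cast at ha₁ ha₂ hb₁ hb₂
    interval_cases a <;> interval_cases b <;> decide
  obtain ⟨e, -, he⟩ := key hd
  exact ⟨e, he⟩

lemma triLattice_dist_le_two {u v : ℤ × ℤ} (h : hexNorm (v - u) ≤ 2) :
    triLattice.dist u v ≤ 2 := by
  obtain ⟨e, he, hde⟩ := exists_hexNorm_le_one_hexNorm_sub_le_one h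
  have h₁ : triLattice.edist u (u + e) ≤ 1 := by
    rwa [triLattice_edist_le_one_iff, add_sub_cancel_left]
  have h₂ : triLattice.edist (u + e) v ≤ 1 := by
    rwa [triLattice_edist_le_one_iff, sub_add_eq_sub_sub_swap, sub_right_comm]
  refine ENat.toNat_le_of_le_natCast ?_
  calc triLattice.edist u v ≤ triLattice.edist u (u + e) + triLattice.edist (u + e) v :=
        SimpleGraph.edist_triangle
    _ ≤ 1 + 1 := add_le_add h₁ h₂
    _ = 2 := by norm_num

/-- Rotation by 60° of the triangular lattice. -/
def hexRot : ℤ × ℤ →+ ℤ × ℤ :=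
  AddMonoidHom.mk' (fun p => (-p.2, p.1 + p.2)) fun p q => by
    simp only [Prod.fst_add, Prod.snd_add, Prod.mk_add_mk, Prod.mk.injEq]
    constructor <;> ring

lemma hexNorm_hexRot (p : ℤ × ℤ) : hexNorm (hexRot p) = hexNorm p := by
  simp only [hexRot, AddMonoidHom.mk'_apply, hexNorm]
  omega

lemma hexNorm_swap (p : ℤ × ℤ) : hexNorm p.swap = hexNorm p := by
  simp only [hexNorm, Prod.fst_swap, Prod.snd_swap]
  omega

lemma linColoring_eq_iff (z : ℤ) (u v : ℤ × ℤ) :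
    linColoring z u = linColoring z v ↔ (7 : ℤ) ∣ v.1 - u.1 + z * (v.2 - u.2) := by
  have hsub : linColoring z v - linColoring z u = ((v.1 - u.1 + z * (v.2 - u.2) : ℤ) : ZMod 7) := by
    simp only [linColoring]
    push_cast
    ring
  rw [eq_comm, ← sub_eq_zero, hsub, ZMod.intCast_zmod_eq_zero_iff_dvd]
  norm_num

lemma linColoring_surjective (z : ZMod 7) : Function.Surjective (linColoring z) := by
  intro k
  obtain ⟨n, rfl⟩ := ZMod.intCast_surjective k
  exact ⟨(n, 0), by simp [linColoring]⟩

lemma mem_closure_of_seven_dvd {p : ℤ × ℤ} (hp : (7 : ℤ) ∣ p.1 + 3 * p.2) :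
    p ∈ AddSubgroup.closure {(1, 2), (3, -1)} := by
  have hp' : p = ((p.1 + 3 * p.2) / 7) • (1, 2) + ((2 * p.1 - p.2) / 7) • (3, -1) := by
    simp only [Prod.ext_iff, Prod.fst_add, Prod.snd_add, Prod.smul_fst, Prod.smul_snd, smul_eq_mul]
    omega
  rw [hp']
  exact add_mem (zsmul_mem (AddSubgroup.subset_closure (by simp)) _)
    (zsmul_mem (AddSubgroup.subset_closure (by simp)) _)

lemma exists_equiv_apply_eq_of_surjective {X Y α : Type*} [Fintype Y] [Fintype α]
    (hcard : Fintype.card Y = Fintype.card α) {f : X → Y} {c : X → α}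
    (hf : Function.Surjective f) (hc : Function.Surjective c)
    (hfc : ∀ x y, f x = f y → c x = c y) : ∃ π : Y ≃ α, ∀ x, c x = π (f x) := by
  let g := c ∘ Function.surjInv hf
  have hcg (x : X) : c x = g (f x) := hfc _ _ (Function.surjInv_eq hf (f x)).symm
  have hg : Function.Surjective g := by
    intro k
    obtain ⟨x, rfl⟩ := hc k
    exact ⟨f x, (hcg x).symm⟩
  exact ⟨.ofBijective g ((Fintype.bijective_iff_surjective_and_card g).mpr ⟨hg, hcard⟩), hcg⟩

def IsNice {α : Type*} (c : ℤ × ℤ → α) : Prop :=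
  ∀ u v, u ≠ v → hexNorm (v - u) ≤ 2 → c u ≠ c v

namespace IsNice

variable {α : Type*} {c : ℤ × ℤ → α}

lemma of_triLattice_dist (h : ∀ u v, u ≠ v → triLattice.dist u v ≤ 2 → c u ≠ c v) :
    IsNice c :=
  fun u v huv hd => h u v huv (triLattice_dist_le_two hd)

lemma eq_or_two_lt_hexNorm (hc : IsNice c) {u v : ℤ × ℤ} (h : c u = c v) :
    u = v ∨ 2 < hexNorm (v - u) := by
  by_contra! hne
  exact hc u v hne.1 hne.2 h

lemma comp_add_left (hc : IsNice c) (w : ℤ × ℤ) : IsNice fun p => c (w + p) := by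
  intro u v huv hd
  refine hc _ _ (by simpa using huv) ?_
  rwa [add_sub_add_left_eq_sub]

lemma comp_addMonoidHom (hc : IsNice c) (L : ℤ × ℤ →+ ℤ × ℤ)
    (hL : ∀ p, hexNorm (L p) = hexNorm p) : IsNice (c ∘ L) := by
  intro u v huv hd
  refine hc _ _ (fun h => huv ?_) (by rwa [← map_sub, hL])
  rw [← sub_eq_zero, ← hexNorm_eq_zero, ← hL, map_sub, h, sub_self, hexNorm_eq_zero]

lemma comp_swap (hc : IsNice c) : IsNice (c ∘ Prod.swap) :=
  hc.comp_addMonoidHom (AddEquiv.prodComm : ℤ × ℤ ≃+ ℤ × ℤ).toAddMonoidHom hexNorm_swap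

lemma comp_hexRot_iterate (hc : IsNice c) (n : ℕ) : IsNice (c ∘ hexRot^[n]) := by
  induction n with
  | zero => exact hc
  | succ n ih =>
    rw [Function.iterate_succ, ← Function.comp_assoc]
    exact ih.comp_addMonoidHom hexRot hexNorm_hexRot

variable [Fintype α]

lemma exists_hexNorm_le_one_apply_eq (hα : Fintype.card α = 7) (hc : IsNice c)
    (w : ℤ × ℤ) (k : α) : ∃ e, hexNorm e ≤ 1 ∧ c (w + e) = k := by
  let ball : Fin 7 → ℤ × ℤ := ![0, (1, 0), (-1, 0), (0, 1), (0, -1), (1, -1), (-1, 1)]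
  have hball : ∀ i j, i ≠ j → ball i ≠ ball j ∧ hexNorm (ball j - ball i) ≤ 2 := by decide
  have hball₁ : ∀ i, hexNorm (ball i) ≤ 1 := by decide
  have hinj : Function.Injective fun i => c (w + ball i) := by
    intro i j hij
    by_contra hne
    obtain ⟨hne', hd⟩ := hball i j hne
    exact hc _ _ (by simpa using hne') (by rwa [add_sub_add_left_eq_sub]) hij
  obtain ⟨i, hi⟩ := ((Fintype.bijective_iff_injective_and_card _).mpr
    ⟨hinj, by simp [hα]⟩).surjective k
  exact ⟨ball i, hball₁ i, hi⟩

lemma surjective (hα : Fintype.card α = 7) (hc : IsNice c) : Function.Surjective c :=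
  fun k => (hc.exists_hexNorm_le_one_apply_eq hα 0 k).imp fun _ he => by simpa using he.2

/-- The colour of `0` occurs around `(1, 1)`, and `(1, 2)`, `(2, 1)` are the only places there
at distance more than 2 from `0`. -/
lemma apply_one_two_or_apply_two_one (hα : Fintype.card α = 7) (hc : IsNice c) :
    c (1, 2) = c 0 ∨ c (2, 1) = c 0 := by
  obtain ⟨⟨x, y⟩, he, hce⟩ := hc.exists_hexNorm_le_one_apply_eq hα (1, 1) (c 0)
  have hsep := hc.eq_or_two_lt_hexNorm hce
  simp only [← not_le, hexNorm_le_iff, Prod.ext_iff, Prod.fst_add, Prod.snd_add, Prod.fst_sub,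
    Prod.snd_sub, Prod.fst_zero, Prod.snd_zero] at he hsep
  obtain ⟨rfl, rfl⟩ | ⟨rfl, rfl⟩ : x = 0 ∧ y = 1 ∨ x = 1 ∧ y = 0 := by omega
  · exact Or.inl hce
  · exact Or.inr hce

/-- Far enough from `0` and `(1, 2)`, the colour of `0` can occur around `(2, 0)` only at
`(3, 0)` or `(3, -1)`, and around `(2, -1)` only at `(3, -1)` or `(3, -2)`; the points `(3, 0)`
and `(3, -2)` are too close to both carry it. -/
lemma apply_three_neg_one (hα : Fintype.card α = 7) (hc : IsNice c) (h : c (1, 2) = c 0) :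
    c (3, -1) = c 0 := by
  obtain ⟨⟨x, y⟩, he, hce⟩ := hc.exists_hexNorm_le_one_apply_eq hα (2, 0) (c 0)
  obtain ⟨⟨x', y'⟩, he', hce'⟩ := hc.exists_hexNorm_le_one_apply_eq hα (2, -1) (c 0)
  have h₁ := hc.eq_or_two_lt_hexNorm hce
  have h₂ := hc.eq_or_two_lt_hexNorm (hce.trans h.symm)
  have h₃ := hc.eq_or_two_lt_hexNorm hce'
  have h₄ := hc.eq_or_two_lt_hexNorm (hce.trans hce'.symm)
  simp only [← not_le, hexNorm_le_iff, Prod.ext_iff, Prod.fst_add, Prod.snd_add, Prod.fst_sub,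
    Prod.snd_sub, Prod.fst_zero, Prod.snd_zero] at he he' h₁ h₂ h₃ h₄
  obtain ⟨rfl, rfl⟩ | ⟨rfl, rfl⟩ : x = 1 ∧ y = -1 ∨ x' = 1 ∧ y' = 0 := by omega
  · exact hce
  · exact hce'

lemma apply_hexRot_iterate_iff (hα : Fintype.card α = 7) (hc : IsNice c) {n : ℕ} (hn : n ≤ 6) :
    c (hexRot^[n] (1, 2)) = c 0 ↔ c (1, 2) = c 0 := by
  have step (k : ℕ) (hk : c (hexRot^[k + 1] (1, 2)) = c 0) : c (hexRot^[k] (1, 2)) = c 0 := by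
    have := (hc.comp_hexRot_iterate (k + 1)).apply_three_neg_one hα (by simpa [iterate_map_zero])
    simpa [iterate_map_zero, Function.iterate_succ_apply, show hexRot (3, -1) = (1, 2) from rfl]
      using this
  have down (m k : ℕ) (hkm : k ≤ m) (hm : c (hexRot^[m] (1, 2)) = c 0) :
      c (hexRot^[k] (1, 2)) = c 0 := by
    induction hkm with
    | refl => exact hm
    | step _ ih => exact ih (step _ hm)
  -- `hexRot^[6] (1, 2)` reduces to `(1, 2)`
  exact ⟨down n 0 n.zero_le, fun h => down 6 n hn h⟩

lemma apply_add_hexRot_iterate_iff (hα : Fintype.card α = 7) (hc : IsNice c) (w : ℤ × ℤ)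
    {n : ℕ} (hn : n ≤ 6) : c (w + hexRot^[n] (1, 2)) = c w ↔ c (w + (1, 2)) = c w := by
  simpa using (hc.comp_add_left w).apply_hexRot_iterate_iff hα hn

lemma apply_eq_of_linColoring_three_eq (hα : Fintype.card α = 7) (hc : IsNice c) {w : ℤ × ℤ}
    (hw : c (w + (1, 2)) = c w) {v : ℤ × ℤ} (hv : linColoring 3 v = linColoring 3 w) :
    c v = c w := by
  let Φ (p : ℤ × ℤ) : Prop :=
    ∀ w, c (w + (1, 2)) = c w → c (w + p) = c w ∧ c (w + p + (1, 2)) = c (w + p)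
  have hgen (n m : ℕ) (hn : n ≤ 6) (hm : m ≤ 6) (hmn : hexRot^[m] (1, 2) = -hexRot^[n] (1, 2)) :
      Φ (hexRot^[n] (1, 2)) := by
    intro w hw
    have h₁ := (hc.apply_add_hexRot_iterate_iff hα w hn).mpr hw
    refine ⟨h₁, (hc.apply_add_hexRot_iterate_iff hα _ hm).mp ?_⟩
    rwa [hmn, add_neg_cancel_right, eq_comm]
  have hΦ : ∀ p ∈ AddSubgroup.closure {(1, 2), (3, -1)}, Φ p := by
    intro p hp
    induction hp using AddSubgroup.closure_induction'' with
    | mem x hx =>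
      rcases hx with rfl | rfl
      · exact hgen 0 3 (by norm_num) (by norm_num) rfl
      · exact hgen 5 2 (by norm_num) (by norm_num) rfl
    | neg_mem x hx =>
      rcases hx with rfl | rfl
      · exact hgen 3 0 (by norm_num) (by norm_num) rfl
      · exact hgen 2 5 (by norm_num) (by norm_num) rfl
    | zero => intro w hw; simpa using hw
    | add x y _ _ hx hy =>
      intro w hw
      obtain ⟨hx₁, hx₂⟩ := hx w hw
      obtain ⟨hy₁, hy₂⟩ := hy (w + x) hx₂
      rw [← add_assoc]
      exact ⟨hy₁.trans hx₁, hy₂⟩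
  have hdvd : (7 : ℤ) ∣ (v - w).1 + 3 * (v - w).2 := by
    simpa using (linColoring_eq_iff 3 w v).mp (by simpa using hv.symm)
  simpa using (hΦ _ (mem_closure_of_seven_dvd hdvd) w hw).1

lemma apply_eq_of_linColoring_five_eq (hα : Fintype.card α = 7) (hc : IsNice c) {w : ℤ × ℤ}
    (hw : c (w + (2, 1)) = c w) {v : ℤ × ℤ} (hv : linColoring 5 v = linColoring 5 w) :
    c v = c w := by
  have hw' : (c ∘ Prod.swap) (w.swap + (1, 2)) = (c ∘ Prod.swap) w.swap := hw
  have hdvd := (linColoring_eq_iff 5 w v).mp (by simpa using hv.symm)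
  have hdvd' : (7 : ℤ) ∣ v.swap.1 - w.swap.1 + 3 * (v.swap.2 - w.swap.2) := by
    simp only [Prod.fst_swap, Prod.snd_swap]
    omega
  have hv' : linColoring 3 v.swap = linColoring 3 w.swap := by
    simpa using ((linColoring_eq_iff 3 w.swap v.swap).mpr hdvd').symm
  simpa using hc.comp_swap.apply_eq_of_linColoring_three_eq hα hw' hv'

lemma not_apply_one_two_and_apply_two_one (hα : Fintype.card α = 7) (hc : IsNice c)
    (u w : ℤ × ℤ) : ¬(c (u + (1, 2)) = c u ∧ c (w + (2, 1)) = c w) := by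
  rintro ⟨hu, hw⟩
  have h₃ (p : ℤ × ℤ) (hp : (7 : ℤ) ∣ p.1 - u.1 + 3 * (p.2 - u.2)) : c p = c u :=
    hc.apply_eq_of_linColoring_three_eq hα hu
      (by simpa using ((linColoring_eq_iff 3 u p).mpr hp).symm)
  have h₅ (p : ℤ × ℤ) (hp : (7 : ℤ) ∣ p.1 - w.1 + 5 * (p.2 - w.2)) : c p = c w :=
    hc.apply_eq_of_linColoring_five_eq hα hw
      (by simpa using ((linColoring_eq_iff 5 w p).mpr hp).symm)
  -- the two congruences are independent since `5 - 3` is invertible mod 7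
  obtain ⟨x, hx₃, hx₅⟩ : ∃ x : ℤ × ℤ,
      (7 : ℤ) ∣ x.1 - u.1 + 3 * (x.2 - u.2) ∧ (7 : ℤ) ∣ x.1 - w.1 + 5 * (x.2 - w.2) :=
    ⟨(13 * (u.1 + 3 * u.2) - 12 * (w.1 + 5 * w.2), 4 * (w.1 + 5 * w.2 - u.1 - 3 * u.2)),
      by omega, by omega⟩
  refine hc (x + (1, 2)) (x + (2, 1)) (by simp) (by rw [add_sub_add_left_eq_sub]; decide) ?_
  calc c (x + (1, 2)) = c u := h₃ _ (by simp only [Prod.fst_add, Prod.snd_add]; omega)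
    _ = c x := (h₃ x hx₃).symm
    _ = c w := h₅ x hx₅
    _ = c (x + (2, 1)) := (h₅ _ (by simp only [Prod.fst_add, Prod.snd_add]; omega)).symm

lemma exists_apply_eq_of_linColoring_eq (hα : Fintype.card α = 7) (hc : IsNice c) :
    ∃ z ∈ ({3, 5} : Set (ZMod 7)), ∀ u v, linColoring z u = linColoring z v → c u = c v := by
  have hdich (u : ℤ × ℤ) : c (u + (1, 2)) = c u ∨ c (u + (2, 1)) = c u := by
    simpa using (hc.comp_add_left u).apply_one_two_or_apply_two_one hα
  by_cases hA : ∀ u, c (u + (1, 2)) = c u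
  · exact ⟨3, by simp, fun u v huv => hc.apply_eq_of_linColoring_three_eq hα (hA v) huv⟩
  · obtain ⟨u₀, hu₀⟩ := not_forall.mp hA
    have hB (v : ℤ × ℤ) : c (v + (2, 1)) = c v :=
      (hdich v).resolve_left fun hv =>
        hc.not_apply_one_two_and_apply_two_one hα v u₀ ⟨hv, (hdich u₀).resolve_left hu₀⟩
    exact ⟨5, by simp, fun u v huv => hc.apply_eq_of_linColoring_five_eq hα (hB v) huv⟩

end IsNice

/-- Every nice 7-coloring of the whole triangular lattice is an Isbell coloring. -/
theorem nice_coloring_isbell (c : ℤ × ℤ → Fin 7)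
    (hnice : ∀ u v : ℤ × ℤ, u ≠ v → triLattice.dist u v ≤ 2 → c u ≠ c v) :
    ∃ z ∈ ({3, 5} : Set (ZMod 7)), ∃ π : ZMod 7 ≃ Fin 7,
      ∀ v : ℤ × ℤ, c v = π (linColoring z v) := by
  have hc : IsNice c := .of_triLattice_dist hnice
  have hα : Fintype.card (Fin 7) = 7 := Fintype.card_fin 7
  obtain ⟨z, hz, hfib⟩ := hc.exists_apply_eq_of_linColoring_eq hα
  obtain ⟨π, hπ⟩ := exists_equiv_apply_eq_of_surjective (by simp) (linColoring_surjective z)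
    (hc.surjective hα) hfib
  exact ⟨z, hz, π, hπ⟩
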